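/- Sufficiency of the D_max condition via a measure-and-prepare broadcaster: let F_C = {γ_C} with γ_C full rank with smallest eigenvalue λ₁ and corresponding eigenprojector ψ_C, and let σ_S be any state with D_max(σ_S‖F_S) ≤ −log λ₁, i.e., λ₁σ_S ≤ γ_S for some γ_S ∈ F_S. Define ζ_C := (γ_C − λ₁ψ_C)/(1−λ₁) and ω_S := (γ_S − λ₁σ_S)/(1−λ₁). Then the channel B(ρ_C) := Tr[ψ_C ρ_C](σ_S ⊗ ψ_C) + Tr[(1−ψ_C)ρ_C](ω_S ⊗ ζ_C) is trace-preserving completely positive, satisfies B(ψ_C) = σ_S ⊗ ψ_C (broadcasting σ_S while preserving ψ_C), and B(γ_C) = λ₁(σ_S ⊗ ψ_C) + (1−λ₁)(ω_S ⊗ ζ_C) has marginals γ_S ∈ F_S and γ_C ∈ F_C (so B is RNG with respect to the maximal composition). -/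

import Mathlib

open Matrix Kronecker ComplexOrder

noncomputable section

namespace QIT

/-- Partial trace over the first tensor factor. -/
def trFst {A B : Type*} [Fintype A] (M : Matrix (A × B) (A × B) ℂ) : Matrix B B ℂ :=
  Matrix.of fun b b' => ∑ a, M (a, b) (a, b')

/-- Partial trace over the second tensor factor. -/
def trSnd {A B : Type*} [Fintype B] (M : Matrix (A × B) (A × B) ℂ) : Matrix A A ℂ :=
  Matrix.of fun a a' => ∑ b, M (a, b) (a', b)

/-- A density matrix: positive semidefinite with unit trace. -/
def IsDensity {A : Type*} [Fintype A] (M : Matrix A A ℂ) : Prop :=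
  M.PosSemidef ∧ M.trace = 1

/-- The trace norm ‖M‖₁ = Tr √(MᴴM). -/
def traceNorm {A : Type*} [Fintype A] [DecidableEq A] (M : Matrix A A ℂ) : ℝ :=
  (((Matrix.posSemidef_conjTranspose_mul_self M).1.eigenvectorUnitary : Matrix A A ℂ) *
    Matrix.diagonal (((↑) : ℝ → ℂ) ∘ (√·) ∘ (Matrix.posSemidef_conjTranspose_mul_self M).1.eigenvalues) *
    (star (Matrix.posSemidef_conjTranspose_mul_self M).1.eigenvectorUnitary : Matrix A A ℂ)).trace.re

/-- The extension `id_{Fin k} ⊗ B` of a map on matrices. -/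
def extFun {C D : Type*} (B : Matrix C C ℂ → Matrix D D ℂ) (k : ℕ)
    (M : Matrix (Fin k × C) (Fin k × C) ℂ) : Matrix (Fin k × D) (Fin k × D) ℂ :=
  Matrix.of fun p q => B (Matrix.of fun c c' => M (p.1, c) (q.1, c')) p.2 q.2

/-- Complete positivity: every extension by an identity preserves positive semidefiniteness. -/
def IsCP {C D : Type*} [Fintype C] [Fintype D] (B : Matrix C C ℂ → Matrix D D ℂ) : Prop :=
  ∀ (k : ℕ) (M : Matrix (Fin k × C) (Fin k × C) ℂ), M.PosSemidef → (extFun B k M).PosSemidef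

/-- Trace preservation. -/
def IsTP {C D : Type*} [Fintype C] [Fintype D] (B : Matrix C C ℂ → Matrix D D ℂ) : Prop :=
  ∀ M, (B M).trace = M.trace

/-- A quantum channel: linear, trace-preserving, completely positive. -/
def IsChannel {C D : Type*} [Fintype C] [Fintype D] (B : Matrix C C ℂ → Matrix D D ℂ) : Prop :=
  IsLinearMap ℂ B ∧ IsTP B ∧ IsCP B

/-- Minimal composition of two free-state sets. -/
def minComp {A B : Type*} (FA : Set (Matrix A A ℂ)) (FB : Set (Matrix B B ℂ)) :
    Set (Matrix (A × B) (A × B) ℂ) :=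
  convexHull ℝ {M | ∃ a ∈ FA, ∃ b ∈ FB, M = a ⊗ₖ b}

/-- Maximal composition of two free-state sets: both marginals are free. -/
def maxComp {A B : Type*} [Fintype A] [Fintype B]
    (FA : Set (Matrix A A ℂ)) (FB : Set (Matrix B B ℂ)) :
    Set (Matrix (A × B) (A × B) ℂ) :=
  {M | trSnd M ∈ FA ∧ trFst M ∈ FB}

/-- Separability: convex combination of products of density matrices. -/
def Separable {A B : Type*} [Fintype A] [Fintype B] (M : Matrix (A × B) (A × B) ℂ) : Prop :=
  M ∈ convexHull ℝ {X | ∃ ξ ζ, IsDensity ξ ∧ IsDensity ζ ∧ X = ξ ⊗ₖ ζ}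

/-- Matrix logarithm of a Hermitian matrix via the spectral decomposition. -/
def mlog {A : Type*} [Fintype A] [DecidableEq A] (M : Matrix A A ℂ) : Matrix A A ℂ :=
  if h : M.IsHermitian then
    (Matrix.IsHermitian.eigenvectorUnitary h : Matrix A A ℂ) *
      Matrix.diagonal (fun i => (Real.log (h.eigenvalues i) : ℂ)) *
      (star (Matrix.IsHermitian.eigenvectorUnitary h) : Matrix A A ℂ)
  else 0

/-- Umegaki relative entropy D(ρ‖σ) = Tr[ρ(log ρ − log σ)]. -/
def relEnt {A : Type*} [Fintype A] [DecidableEq A] (ρ σ : Matrix A A ℂ) : ℝ :=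
  ((ρ * (mlog ρ - mlog σ)).trace).re

/-- Reversed relative entropy of resource R̃(ρ) = inf_{γ free} D(γ‖ρ). -/
def revRelEntRes {A : Type*} [Fintype A] [DecidableEq A]
    (F : Set (Matrix A A ℂ)) (ρ : Matrix A A ℂ) : ℝ :=
  sInf {x | ∃ γ ∈ F, x = relEnt γ ρ}

/-- Max-relative entropy of resource. -/
def Dmax {A : Type*} [Fintype A] (ρ : Matrix A A ℂ) (F : Set (Matrix A A ℂ)) : ℝ :=
  sInf {x | ∃ r : ℝ, ∃ ω ∈ F, x = Real.log r ∧ (r • ω - ρ).PosSemidef}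


/-- The extension `Λ ⊗ id_R` of a map on matrices, acting on the first factor. -/
def extFunR {A A' R : Type*} (Λ : Matrix A A ℂ → Matrix A' A' ℂ)
    (M : Matrix (A × R) (A × R) ℂ) : Matrix (A' × R) (A' × R) ℂ :=
  Matrix.of fun p q => Λ (Matrix.of fun a a' => M (a, p.2) (a', q.2)) p.1 q.1


/-!
`Tr[ψ ·]` and `Tr[(1 - ψ) ·]` form a two-outcome POVM, so `B` is a measure-and-prepare map, and
such maps are completely positive because, writing `E = Fᴴ F`, the blockwise traces `Tr[E Mᵢⱼ]`
are a partial trace of the positive matrix `(1 ⊗ F) M (1 ⊗ F)ᴴ`. Since `λ₁` is the smallest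
eigenvalue, `γ_C - λ₁ψ = (γ_C - λ₁) + λ₁(1 - ψ) ≥ 0`, so `ζ` is a state, as is `ω` by
`λ₁σ ≤ γ_S`. Then `B(γ_C) = λ₁ σ ⊗ ψ + (1 - λ₁) ω ⊗ ζ` is a convex combination of product
states, with marginals `λ₁σ + (1 - λ₁)ω = γ_S` and `λ₁ψ + (1 - λ₁)ζ = γ_C`.
-/

section Spectral

variable {n 𝕜 : Type*} [Fintype n] [RCLike 𝕜]

theorem _root_.Matrix.IsHermitian.posSemidef_of_eigen_nonneg {A : Matrix n n 𝕜}
    (hA : A.IsHermitian) (h : ∀ (μ : ℝ) (w : n → 𝕜), w ≠ 0 → A *ᵥ w = (μ : 𝕜) • w → 0 ≤ μ) :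
    A.PosSemidef := by
  classical
  rw [hA.posSemidef_iff_eigenvalues_nonneg]
  intro i
  refine h _ (hA.eigenvectorBasis i).ofLp
    (fun h0 => hA.eigenvectorBasis.orthonormal.ne_zero i ?_) ?_
  · ext j; exact congrFun h0 j
  · rw [hA.mulVec_eigenvectorBasis, RCLike.real_smul_eq_coe_smul (K := 𝕜)]

theorem _root_.Matrix.IsHermitian.posSemidef_sub_smul_one [DecidableEq n] {A : Matrix n n 𝕜}
    (hA : A.IsHermitian) {c : ℝ} (h : ∀ (μ : ℝ) (w : n → 𝕜), w ≠ 0 → A *ᵥ w = (μ : 𝕜) • w → c ≤ μ) :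
    (A - c • 1).PosSemidef := by
  refine (hA.sub (isHermitian_one.smul (IsSelfAdjoint.all c))).posSemidef_of_eigen_nonneg
    fun μ w hw hμ => ?_
  have : A *ᵥ w = ((μ + c : ℝ) : 𝕜) • w := by
    rw [sub_mulVec, smul_mulVec, one_mulVec, sub_eq_iff_eq_add] at hμ
    rw [hμ, RCLike.ofReal_add, add_smul, RCLike.real_smul_eq_coe_smul (K := 𝕜)]
  linarith [h _ w hw this]

end Spectral

section PartialTrace

variable {A B : Type*}

theorem trSnd_eq_sum_submatrix [Fintype B] (M : Matrix (A × B) (A × B) ℂ) :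
    trSnd M = ∑ b, M.submatrix (·, b) (·, b) := by
  ext a a'; simp [trSnd, Matrix.sum_apply]

theorem _root_.Matrix.PosSemidef.trSnd [Fintype B] {M : Matrix (A × B) (A × B) ℂ}
    (hM : M.PosSemidef) : (trSnd M).PosSemidef := by
  rw [trSnd_eq_sum_submatrix]
  exact posSemidef_sum _ fun b _ => hM.submatrix _

theorem trSnd_add [Fintype B] (M N : Matrix (A × B) (A × B) ℂ) :
    trSnd (M + N) = trSnd M + trSnd N := by
  ext a a'; simp [trSnd, Finset.sum_add_distrib]

theorem trSnd_smul [Fintype B] (c : ℂ) (M : Matrix (A × B) (A × B) ℂ) :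
    trSnd (c • M) = c • trSnd M := by
  ext a a'; simp [trSnd, Finset.mul_sum]

theorem trSnd_kronecker [Fintype B] (X : Matrix A A ℂ) (Y : Matrix B B ℂ) :
    trSnd (X ⊗ₖ Y) = Y.trace • X := by
  ext a a'; simp [trSnd, Matrix.trace, Finset.mul_sum, mul_comm]

theorem trFst_add [Fintype A] (M N : Matrix (A × B) (A × B) ℂ) :
    trFst (M + N) = trFst M + trFst N := by
  ext b b'; simp [trFst, Finset.sum_add_distrib]

theorem trFst_smul [Fintype A] (c : ℂ) (M : Matrix (A × B) (A × B) ℂ) :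
    trFst (c • M) = c • trFst M := by
  ext b b'; simp [trFst, Finset.mul_sum]

theorem trFst_kronecker [Fintype A] (X : Matrix A A ℂ) (Y : Matrix B B ℂ) :
    trFst (X ⊗ₖ Y) = X.trace • Y := by
  ext b b'; simp [trFst, Matrix.trace, Finset.sum_mul]

end PartialTrace

section Blocks

variable {k C D : Type*} [Fintype k] [Fintype C]

theorem one_kronecker_mul_mul_one_kronecker_apply [DecidableEq k] (F : Matrix D C ℂ)
    (G : Matrix C D ℂ) (M : Matrix (k × C) (k × C) ℂ) (i j : k) (d d' : D) :
    (((1 : Matrix k k ℂ) ⊗ₖ F) * M * ((1 : Matrix k k ℂ) ⊗ₖ G)) (i, d) (j, d') =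
      (F * Matrix.of (fun c c' => M (i, c) (j, c')) * G) d d' := by
  simp [Matrix.mul_apply, Fintype.sum_prod_type, Matrix.one_apply, ite_mul, Finset.sum_mul]

open scoped MatrixOrder in
theorem posSemidef_trace_mul_blocks {E : Matrix C C ℂ} (hE : E.PosSemidef)
    {M : Matrix (k × C) (k × C) ℂ} (hM : M.PosSemidef) :
    (Matrix.of fun i j : k => (E * Matrix.of fun c c' => M (i, c) (j, c')).trace).PosSemidef := by
  classical
  obtain ⟨F, rfl⟩ := CStarAlgebra.nonneg_iff_eq_star_mul_self.mp hE.nonneg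
  have hF : (Matrix.of fun i j : k => (star F * F * Matrix.of fun c c' => M (i, c) (j, c')).trace)
      = trSnd (((1 : Matrix k k ℂ) ⊗ₖ F) * M * ((1 : Matrix k k ℂ) ⊗ₖ F)ᴴ) := by
    ext i j
    rw [conjTranspose_kronecker, conjTranspose_one, trSnd, of_apply, of_apply,
      star_eq_conjTranspose, ← trace_mul_cycle F]
    simp only [one_kronecker_mul_mul_one_kronecker_apply]
    rfl
  rw [hF]
  exact (hM.mul_mul_conjTranspose_same _).trSnd

end Blocks

section MeasurePrepare

variable {ι C D : Type*} [Fintype ι] [Fintype C]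

def measurePrepare (E : ι → Matrix C C ℂ) (τ : ι → Matrix D D ℂ) (ρ : Matrix C C ℂ) :
    Matrix D D ℂ :=
  ∑ i, (E i * ρ).trace • τ i

theorem isLinearMap_measurePrepare (E : ι → Matrix C C ℂ) (τ : ι → Matrix D D ℂ) :
    IsLinearMap ℂ (measurePrepare E τ) where
  map_add ρ ρ' := by
    simp only [measurePrepare, mul_add, trace_add, add_smul, Finset.sum_add_distrib]
  map_smul c ρ := by
    simp only [measurePrepare, Matrix.mul_smul, trace_smul, smul_eq_mul, smul_smul,
      Finset.smul_sum]

theorem isTP_measurePrepare [Fintype D] [DecidableEq C] {E : ι → Matrix C C ℂ}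
    (hE : ∑ i, E i = 1) {τ : ι → Matrix D D ℂ} (hτ : ∀ i, (τ i).trace = 1) :
    IsTP (measurePrepare E τ) := by
  intro ρ
  calc (measurePrepare E τ ρ).trace = ∑ i, (E i * ρ).trace := by
        simp only [measurePrepare, trace_sum, trace_smul, hτ, smul_eq_mul, mul_one]
    _ = ρ.trace := by rw [← trace_sum, ← Finset.sum_mul, hE, one_mul]

theorem extFun_measurePrepare (E : ι → Matrix C C ℂ) (τ : ι → Matrix D D ℂ) (k : ℕ)
    (M : Matrix (Fin k × C) (Fin k × C) ℂ) :
    extFun (measurePrepare E τ) k M =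
      ∑ i, (Matrix.of fun a b : Fin k =>
        (E i * Matrix.of fun c c' => M (a, c) (b, c')).trace) ⊗ₖ τ i := by
  ext ⟨a, d⟩ ⟨b, d'⟩
  simp [extFun, measurePrepare, Matrix.sum_apply]

theorem isCP_measurePrepare [Fintype D] {E : ι → Matrix C C ℂ} (hE : ∀ i, (E i).PosSemidef)
    {τ : ι → Matrix D D ℂ} (hτ : ∀ i, (τ i).PosSemidef) : IsCP (measurePrepare E τ) := by
  intro k M hM
  rw [extFun_measurePrepare]
  exact posSemidef_sum _ fun i _ => (posSemidef_trace_mul_blocks (hE i) hM).kronecker (hτ i)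

theorem isChannel_measurePrepare [Fintype D] [DecidableEq C] {E : ι → Matrix C C ℂ}
    (hE : ∀ i, (E i).PosSemidef) (hsum : ∑ i, E i = 1)
    {τ : ι → Matrix D D ℂ} (hτ : ∀ i, IsDensity (τ i)) : IsChannel (measurePrepare E τ) :=
  ⟨isLinearMap_measurePrepare E τ, isTP_measurePrepare hsum fun i => (hτ i).2,
    isCP_measurePrepare hE fun i => (hτ i).1⟩

end MeasurePrepare

section RankOneProjection

variable {n : Type*} [Fintype n] {v : n → ℂ}

theorem star_dotProduct_self_eq_one (hv : ∑ i, Complex.normSq (v i) = 1) : star v ⬝ᵥ v = 1 := by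
  have h := congrArg ((↑) : ℝ → ℂ) hv
  push_cast [Complex.normSq_eq_conj_mul_self] at h
  exact h

variable (hv : star v ⬝ᵥ v = 1)
include hv

theorem isStarProjection_vecMulVec_self_star : IsStarProjection (vecMulVec v (star v)) := by
  refine ⟨?_, ?_⟩
  · rw [IsIdempotentElem, vecMulVec_mul_vecMulVec, hv, one_smul]
  · ext i j; simp [vecMulVec_apply, mul_comm]

theorem isDensity_vecMulVec_self_star : IsDensity (vecMulVec v (star v)) :=
  ⟨posSemidef_vecMulVec_self_star v, by rw [trace_vecMulVec, dotProduct_comm, hv]⟩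

theorem trace_vecMulVec_self_star_mul_of_mulVec_eq {A : Matrix n n ℂ} {μ : ℂ}
    (hA : A *ᵥ v = μ • v) : (vecMulVec v (star v) * A).trace = μ := by
  rw [trace_mul_comm, mul_vecMulVec, hA, trace_vecMulVec, smul_dotProduct, dotProduct_comm, hv,
    smul_eq_mul, mul_one]

end RankOneProjection

section Mixture

theorem smul_add_one_sub_smul_inv_smul_sub {M : Type*} [AddCommGroup M] [Module ℝ M] {t : ℝ}
    (ht : t ≠ 1) (x y : M) : t • x + (1 - t) • (1 - t)⁻¹ • (y - t • x) = y := by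
  rw [smul_smul, mul_inv_cancel₀ (sub_ne_zero.mpr ht.symm), one_smul, add_sub_cancel]

theorem isDensity_inv_smul_sub {n : Type*} [Fintype n] {γ X : Matrix n n ℂ} {t : ℝ}
    (hγ : IsDensity γ) (hX : X.trace = 1) (ht : t < 1) (hdom : (γ - t • X).PosSemidef) :
    IsDensity ((1 - t)⁻¹ • (γ - t • X)) := by
  refine ⟨hdom.smul (inv_nonneg.mpr (sub_nonneg.mpr ht.le)), ?_⟩
  have h1t : (1 - t : ℂ) ≠ 0 := by exact_mod_cast (sub_pos.mpr ht).ne'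
  rw [trace_smul, trace_sub, trace_smul, hγ.2, hX, Complex.real_smul, Complex.real_smul]
  push_cast
  rw [mul_one, inv_mul_cancel₀ h1t]

theorem IsDensity.kronecker {A B : Type*} [Fintype A] [Fintype B] {ξ : Matrix A A ℂ}
    {ζ : Matrix B B ℂ} (hξ : IsDensity ξ) (hζ : IsDensity ζ) : IsDensity (ξ ⊗ₖ ζ) :=
  ⟨hξ.1.kronecker hζ.1, by rw [trace_kronecker, hξ.2, hζ.2, one_mul]⟩

theorem separable_smul_kronecker_add {A B : Type*} [Fintype A] [Fintype B]
    {ξ₁ ξ₂ : Matrix A A ℂ} {ζ₁ ζ₂ : Matrix B B ℂ} (hξ₁ : IsDensity ξ₁) (hζ₁ : IsDensity ζ₁)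
    (hξ₂ : IsDensity ξ₂) (hζ₂ : IsDensity ζ₂) {t : ℝ} (h0 : 0 ≤ t) (h1 : t ≤ 1) :
    Separable ((t : ℂ) • (ξ₁ ⊗ₖ ζ₁) + ((1 - t : ℝ) : ℂ) • (ξ₂ ⊗ₖ ζ₂)) := by
  rw [Separable, Complex.coe_smul, Complex.coe_smul]
  refine convex_convexHull ℝ _ (subset_convexHull ℝ _ ?_) (subset_convexHull ℝ _ ?_) h0
    (sub_nonneg.mpr h1) (add_sub_cancel _ _)
  exacts [⟨ξ₁, ζ₁, hξ₁, hζ₁, rfl⟩, ⟨ξ₂, ζ₂, hξ₂, hζ₂, rfl⟩]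

end Mixture

theorem measure_and_prepare_broadcaster_general
    {S C : Type*} [Fintype S] [Fintype C] [DecidableEq C]
    (γC : Matrix C C ℂ) (hγCdens : IsDensity γC)
    (lam : ℝ) (hlam0 : 0 < lam) (hlam1 : lam < 1)
    (v : C → ℂ) (hv : (∑ i, Complex.normSq (v i)) = 1)
    (hev : γC *ᵥ v = (lam : ℂ) • v)
    (hmin : ∀ (μ : ℝ) (w : C → ℂ), w ≠ 0 → γC *ᵥ w = (μ : ℂ) • w → lam ≤ μ)
    (σ : Matrix S S ℂ) (hσ : IsDensity σ)
    (γS : Matrix S S ℂ) (hγSdens : IsDensity γS)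
    (hdom : (γS - lam • σ).PosSemidef) :
    let ψ : Matrix C C ℂ := Matrix.vecMulVec v (star v)
    let ζ : Matrix C C ℂ := (1 - lam)⁻¹ • (γC - lam • ψ)
    let ω : Matrix S S ℂ := (1 - lam)⁻¹ • (γS - lam • σ)
    let B : Matrix C C ℂ → Matrix (S × C) (S × C) ℂ := fun ρ =>
      ((ψ * ρ).trace) • (σ ⊗ₖ ψ) + (((1 - ψ) * ρ).trace) • (ω ⊗ₖ ζ)
    IsDensity ζ ∧ IsDensity ω ∧
    IsChannel B ∧
    B ψ = σ ⊗ₖ ψ ∧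
    B γC = (lam : ℂ) • (σ ⊗ₖ ψ) + ((1 - lam : ℝ) : ℂ) • (ω ⊗ₖ ζ) ∧
    trSnd (B γC) = γS ∧ trFst (B γC) = γC ∧
    Separable (B γC) := by
  intro ψ ζ ω B
  have hv1 := star_dotProduct_self_eq_one hv
  have hψproj : IsStarProjection ψ := isStarProjection_vecMulVec_self_star hv1
  have hψ : IsDensity ψ := isDensity_vecMulVec_self_star hv1
  have hψperp : (1 - ψ).PosSemidef := by
    open scoped MatrixOrder in exact nonneg_iff_posSemidef.mp hψproj.one_sub_nonneg
  have hζ : IsDensity ζ := by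
    refine isDensity_inv_smul_sub hγCdens hψ.2 hlam1 ?_
    rw [show γC - lam • ψ = (γC - lam • 1) + lam • (1 - ψ) by rw [smul_sub]; abel]
    exact (hγCdens.1.isHermitian.posSemidef_sub_smul_one hmin).add (hψperp.smul hlam0.le)
  have hω : IsDensity ω := isDensity_inv_smul_sub hγSdens hσ.2 hlam1 hdom
  have hψγ : (ψ * γC).trace = lam := trace_vecMulVec_self_star_mul_of_mulVec_eq hv1 hev
  have hBγ : B γC = (lam : ℂ) • (σ ⊗ₖ ψ) + ((1 - lam : ℝ) : ℂ) • (ω ⊗ₖ ζ) := by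
    simp only [B, sub_mul, one_mul, trace_sub, hψγ, hγCdens.2, Complex.ofReal_sub,
      Complex.ofReal_one]
  have hB : B = measurePrepare ![ψ, 1 - ψ] ![σ ⊗ₖ ψ, ω ⊗ₖ ζ] := by
    funext ρ; simp [B, measurePrepare, Fin.sum_univ_two]
  refine ⟨hζ, hω, hB ▸ isChannel_measurePrepare ?_ ?_ ?_, ?_, hBγ, ?_, ?_,
    hBγ ▸ separable_smul_kronecker_add hσ hψ hω hζ hlam0.le hlam1.le⟩
  · exact Fin.forall_fin_two.mpr ⟨hψ.1, hψperp⟩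
  · simp [Fin.sum_univ_two]
  · exact Fin.forall_fin_two.mpr ⟨hσ.kronecker hψ, hω.kronecker hζ⟩
  · simp only [B, hψproj.isIdempotentElem.eq, hψproj.one_sub_mul_self, hψ.2, trace_zero,
      one_smul, zero_smul, add_zero]
  · rw [hBγ, trSnd_add, trSnd_smul, trSnd_smul, trSnd_kronecker, trSnd_kronecker, hψ.2, hζ.2,
      one_smul, one_smul, Complex.coe_smul, Complex.coe_smul,
      smul_add_one_sub_smul_inv_smul_sub hlam1.ne]
  · rw [hBγ, trFst_add, trFst_smul, trFst_smul, trFst_kronecker, trFst_kronecker, hσ.2, hω.2,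
      one_smul, one_smul, Complex.coe_smul, Complex.coe_smul,
      smul_add_one_sub_smul_inv_smul_sub hlam1.ne]

/-- sufficiency of the `D_max` condition via the measure-and-prepare
broadcaster `B(ρ) = Tr[ψρ](σ ⊗ ψ) + Tr[(1−ψ)ρ](ω ⊗ ζ)`. It is a channel, broadcasts
`σ` while preserving `ψ`, `B(γ_C)` has free marginals `γ_S, γ_C`, and is separable. -/
theorem measure_and_prepare_broadcaster
    {S C : Type*} [Fintype S] [DecidableEq S] [Fintype C] [DecidableEq C]
    (FS : Set (Matrix S S ℂ))
    (γC : Matrix C C ℂ) (hγCdens : IsDensity γC) (hγCpd : γC.PosDef)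
    (lam : ℝ) (hlam0 : 0 < lam) (hlam1 : lam < 1)
    (v : C → ℂ) (hv : (∑ i, Complex.normSq (v i)) = 1)
    (hev : γC *ᵥ v = (lam : ℂ) • v)
    (hmin : ∀ (μ : ℝ) (w : C → ℂ), w ≠ 0 → γC *ᵥ w = (μ : ℂ) • w → lam ≤ μ)
    (σ : Matrix S S ℂ) (hσ : IsDensity σ)
    (γS : Matrix S S ℂ) (hγSfree : γS ∈ FS) (hγSdens : IsDensity γS)
    (hdom : (γS - lam • σ).PosSemidef) :
    let ψ : Matrix C C ℂ := Matrix.vecMulVec v (star v)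
    let ζ : Matrix C C ℂ := (1 - lam)⁻¹ • (γC - lam • ψ)
    let ω : Matrix S S ℂ := (1 - lam)⁻¹ • (γS - lam • σ)
    let B : Matrix C C ℂ → Matrix (S × C) (S × C) ℂ := fun ρ =>
      ((ψ * ρ).trace) • (σ ⊗ₖ ψ) + (((1 - ψ) * ρ).trace) • (ω ⊗ₖ ζ)
    IsDensity ζ ∧ IsDensity ω ∧
    IsChannel B ∧
    B ψ = σ ⊗ₖ ψ ∧
    B γC = (lam : ℂ) • (σ ⊗ₖ ψ) + ((1 - lam : ℝ) : ℂ) • (ω ⊗ₖ ζ) ∧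
    trSnd (B γC) = γS ∧ trFst (B γC) = γC ∧
    Separable (B γC) :=
  measure_and_prepare_broadcaster_general γC hγCdens lam hlam0 hlam1 v hv hev hmin σ hσ γS hγSdens
    hdom

end QIT
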